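/- arXiv:2504.11503 — 13 statements merged into one kernel-verified Lean document; each statement's English description precedes it below -/
import Mathlib

section
/- Let G be a group, H a subgroup of G, and A ⊆ H. Then A is a left factor of H if and only if A is a left factor of G. -/
/-- `S = A · B` (for a subset `S` of the group `G`): all products `a * b` with `a ∈ A`,
`b ∈ B` lie in `S`, and every element of `S` can be written in exactly one way as such
a product. -/
def IsDirectProdIn {G : Type*} [Group G] (S A B : Set G) : Prop :=
  (∀ a ∈ A, ∀ b ∈ B, a * b ∈ S) ∧
  ∀ g ∈ S, ∃! p : G × G, p.1 ∈ A ∧ p.2 ∈ B ∧ p.1 * p.2 = g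

/-- `A` is a left factor of `S`: there is `B ⊆ S` with `S = A · B`. -/
def IsLeftFactorIn {G : Type*} [Group G] (S A : Set G) : Prop :=
  ∃ B : Set G, B ⊆ S ∧ IsDirectProdIn S A B

/-- `A` is a right factor of `S`: there is `B ⊆ S` with `S = B · A`. -/
def IsRightFactorIn {G : Type*} [Group G] (S A : Set G) : Prop :=
  ∃ B : Set G, B ⊆ S ∧ IsDirectProdIn S B A

/-- `A` is a factor of `S`: it is a left factor or a right factor of `S`. -/
def IsFactorIn {G : Type*} [Group G] (S A : Set G) : Prop :=
  IsLeftFactorIn S A ∨ IsRightFactorIn S A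

/-- If `A ⊆ H ≤ G`, then `A` is a left factor of `H` if and only if it is a left factor
of `G`. -/
theorem stmt_3 {G : Type*} [Group G] (H : Subgroup G) (A : Set G) (hA : A ⊆ (H : Set G)) :
    IsLeftFactorIn (H : Set G) A ↔ IsLeftFactorIn (Set.univ : Set G) A := by
  constructor
  · -- H = A · B  →  G = A · (B · T) for a right transversal T
    rintro ⟨B, hBH, hprod, huniq⟩
    set t : G → G := fun g => (Quotient.mk (QuotientGroup.rightRel H) g).out with ht_def
    have ht : ∀ g : G, g * (t g)⁻¹ ∈ H := by
      intro g
      have h : (QuotientGroup.rightRel H).r (Quotient.mk (QuotientGroup.rightRel H) g).out g :=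
        Quotient.mk_out g
      exact QuotientGroup.rightRel_apply.mp h
    have hteq : ∀ g s : G, g * s⁻¹ ∈ H → t g = t s := by
      intro g s hgs
      have h1 : Quotient.mk (QuotientGroup.rightRel H) g
          = Quotient.mk (QuotientGroup.rightRel H) s := by
        apply Quotient.sound
        apply QuotientGroup.rightRel_apply.mpr
        have := H.inv_mem hgs
        simpa using this
      simp only [ht_def, h1]
    refine ⟨{x : G | ∃ b ∈ B, ∃ g : G, x = b * t g}, fun _ _ => Set.mem_univ _,
      fun _ _ _ _ => Set.mem_univ _, ?_⟩
    intro g _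
    obtain ⟨⟨a, b⟩, ⟨haA, hbB, hab⟩, hu⟩ := huniq (g * (t g)⁻¹) (ht g)
    refine ⟨(a, b * t g), ⟨haA, ⟨b, hbB, g, rfl⟩, by
      rw [← mul_assoc, hab]; group⟩, ?_⟩
    rintro ⟨a', x⟩ ⟨ha'A, ⟨b', hb'B, g', rfl⟩, heq⟩
    simp only at heq
    have hmem : a' * b' ∈ H := H.mul_mem (hA ha'A) (hBH hb'B)
    have hgt : g * (t g')⁻¹ ∈ H := by
      have : g * (t g')⁻¹ = a' * b' := by rw [← heq]; group
      rw [this]; exact hmem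
    have htg' : t g' * g'⁻¹ ∈ H := by
      have := H.inv_mem (ht g')
      simpa using this
    have htgg : t g = t g' := by
      apply (hteq g (t g') hgt).trans
      exact hteq (t g') g' htg'
    have hdec : a' * b' = g * (t g)⁻¹ := by
      rw [htgg, ← heq]; group
    have := hu (a', b') ⟨ha'A, hb'B, hdec⟩
    have ha : a' = a := congrArg Prod.fst this
    have hb : b' = b := congrArg Prod.snd this
    simp [ha, hb, htgg]
  · -- G = A · B  →  H = A · (B ∩ H)
    rintro ⟨B, _, _, huniq⟩
    refine ⟨B ∩ (H : Set G), Set.inter_subset_right,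
      fun a ha b hb => H.mul_mem (hA ha) hb.2, ?_⟩
    intro g hg
    obtain ⟨⟨a, b⟩, ⟨haA, hbB, hab⟩, hu⟩ := huniq g (Set.mem_univ g)
    have hbH : b ∈ (H : Set G) := by
      have : b = a⁻¹ * g := by rw [← hab]; group
      rw [this]; exact H.mul_mem (H.inv_mem (hA haA)) hg
    refine ⟨(a, b), ⟨haA, ⟨hbB, hbH⟩, hab⟩, ?_⟩
    rintro ⟨a', b'⟩ ⟨ha', hb', heq⟩
    exact hu (a', b') ⟨ha', hb'.1, heq⟩
end

section
/- Let G be a group, H a subgroup of G, and A ⊆ H. Then A is a right factor of H if and only if A is a right factor of G. -/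
/-- If `A ⊆ H ≤ G`, then `A` is a right factor of `H` if and only if it is a right factor
of `G`. -/
theorem stmt_4 {G : Type*} [Group G] (H : Subgroup G) (A : Set G) (hA : A ⊆ (H : Set G)) :
    IsRightFactorIn (H : Set G) A ↔ IsRightFactorIn (Set.univ : Set G) A := by
  constructor
  · rintro ⟨B, hBH, _, huniq⟩
    refine ⟨{g | ∃ q : G ⧸ H, ∃ b ∈ B, g = q.out * b}, fun _ _ => trivial,
      fun _ _ _ _ => trivial, ?_⟩
    intro g _
    set q : G ⧸ H := QuotientGroup.mk g with hq
    have hout : ((q.out : G) : G ⧸ H) = (g : G ⧸ H) :=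
      (QuotientGroup.out_eq' q).trans hq.symm
    have hh : q.out⁻¹ * g ∈ H := QuotientGroup.eq.mp hout
    obtain ⟨⟨b, a⟩, ⟨hb, ha, hba⟩, hU⟩ := huniq (q.out⁻¹ * g) hh
    refine ⟨(q.out * b, a), ⟨⟨q, b, hb, rfl⟩, ha, by
      show q.out * b * a = g
      rw [mul_assoc]
      rw [show b * a = q.out⁻¹ * g from hba]
      rw [mul_inv_cancel_left]⟩, ?_⟩
    rintro ⟨x, a'⟩ ⟨⟨q', b', hb', rfl⟩, ha', hxa⟩
    simp only [] at hxa ha' ⊢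
    have hmem : b' * a' ∈ H := H.mul_mem (hBH hb') (hA ha')
    have hq' : q' = q := by
      have h2 : ((q'.out : G) : G ⧸ H) = (g : G ⧸ H) := by
        rw [QuotientGroup.eq, ← hxa]
        simpa [mul_assoc] using hmem
      calc q' = ((q'.out : G) : G ⧸ H) := (QuotientGroup.out_eq' q').symm
        _ = (g : G ⧸ H) := h2
        _ = q := hq.symm
    subst hq'
    have heq : (b', a') = (b, a) := hU (b', a') ⟨hb', ha', by
      show b' * a' = q.out⁻¹ * g
      rw [← hxa]; group⟩
    rw [Prod.mk.injEq] at heq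
    rw [heq.1, heq.2]
  · rintro ⟨B, _, _, huniq⟩
    refine ⟨B ∩ (H : Set G), Set.inter_subset_right,
      fun b hb a ha => H.mul_mem hb.2 (hA ha), ?_⟩
    intro h hh
    obtain ⟨⟨b, a⟩, ⟨hb, ha, hba⟩, hU⟩ := huniq h trivial
    have hbH : b ∈ (H : Set G) := by
      have hb2 : b = h * a⁻¹ := by rw [← hba]; group
      rw [hb2]; exact H.mul_mem hh (H.inv_mem (hA ha))
    exact ⟨(b, a), ⟨⟨hb, hbH⟩, ha, hba⟩, fun p ⟨hp1, hp2, hp3⟩ => hU p ⟨hp1.1, hp2, hp3⟩⟩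
end

section
/- Let G be a group and A ⊆ G. Then A is a factor of G if and only if A is a factor of the subgroup ⟨A⟩ generated by A. -/
open Pointwise


private lemma left_up {G : Type*} [Group G] (H : Subgroup G) (A : Set G)
    (h : IsLeftFactorIn (H : Set G) A) : IsLeftFactorIn (Set.univ : Set G) A := by
  classical
  obtain ⟨B, _hBH, hprod, huniq⟩ := h
  set rep : G → G := fun g => Quotient.out (Quotient.mk (QuotientGroup.rightRel H) g) with hrep
  have hrep_spec : ∀ g, g * (rep g)⁻¹ ∈ H := by
    intro g
    have h1 : (QuotientGroup.rightRel H) (rep g) g :=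
      Quotient.exact (Quotient.out_eq _)
    exact QuotientGroup.rightRel_apply.mp h1
  have hrep_eq : ∀ g t, g * t⁻¹ ∈ H → rep g = rep t := by
    intro g t hgt
    have : Quotient.mk (QuotientGroup.rightRel H) t = Quotient.mk (QuotientGroup.rightRel H) g :=
      Quotient.sound (QuotientGroup.rightRel_apply.mpr hgt)
    simp only [hrep, this]
  have hrep_idem : ∀ g, rep (rep g) = rep g := by
    intro g
    simp only [hrep, Quotient.out_eq]
  refine ⟨B * Set.range rep, Set.subset_univ _, fun a _ b _ => trivial, ?_⟩
  intro g _
  obtain ⟨⟨a, b⟩, ⟨ha, hb, hab⟩, hu⟩ := huniq _ (hrep_spec g)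
  refine ⟨(a, b * rep g), ⟨ha, Set.mul_mem_mul hb ⟨g, rfl⟩, by
    rw [← mul_assoc, hab]; group⟩, ?_⟩
  rintro ⟨a', c'⟩ ⟨ha', hc', heq⟩
  obtain ⟨b', hb', t', ⟨g', rfl⟩, rfl⟩ := hc'
  simp only at heq ⊢
  have hmem : a' * b' ∈ H := hprod a' ha' b' hb'
  have ht : rep g' = rep g := by
    have : g * (rep g')⁻¹ ∈ H := by
      rw [← heq, mul_assoc]; simpa [mul_assoc] using hmem
    rw [← hrep_idem g', hrep_eq g (rep g') this]
  have hab' : a' * b' = g * (rep g)⁻¹ := by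
    rw [ht] at heq
    rw [eq_mul_inv_iff_mul_eq, mul_assoc, heq]
  have := hu (a', b') ⟨ha', hb', hab'⟩
  rw [Prod.mk.injEq] at this
  rw [this.1, this.2, ht]

private lemma right_up {G : Type*} [Group G] (H : Subgroup G) (A : Set G)
    (h : IsRightFactorIn (H : Set G) A) : IsRightFactorIn (Set.univ : Set G) A := by
  classical
  obtain ⟨B, _hBH, hprod, huniq⟩ := h
  set rep : G → G := fun g => Quotient.out (Quotient.mk (QuotientGroup.leftRel H) g) with hrep
  have hrep_spec : ∀ g, (rep g)⁻¹ * g ∈ H := by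
    intro g
    have h1 : (QuotientGroup.leftRel H) (rep g) g :=
      Quotient.exact (Quotient.out_eq _)
    exact QuotientGroup.leftRel_apply.mp h1
  have hrep_eq : ∀ g t, t⁻¹ * g ∈ H → rep g = rep t := by
    intro g t hgt
    have : Quotient.mk (QuotientGroup.leftRel H) t = Quotient.mk (QuotientGroup.leftRel H) g :=
      Quotient.sound (QuotientGroup.leftRel_apply.mpr hgt)
    simp only [hrep, this]
  have hrep_idem : ∀ g, rep (rep g) = rep g := by
    intro g
    simp only [hrep, Quotient.out_eq]
  refine ⟨Set.range rep * B, Set.subset_univ _, fun b _ a _ => trivial, ?_⟩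
  intro g _
  obtain ⟨⟨b, a⟩, ⟨hb, ha, hba⟩, hu⟩ := huniq _ (hrep_spec g)
  refine ⟨(rep g * b, a), ⟨Set.mul_mem_mul ⟨g, rfl⟩ hb, ha, by
    rw [mul_assoc, hba]; group⟩, ?_⟩
  rintro ⟨c', a'⟩ ⟨hc', ha', heq⟩
  obtain ⟨t', ⟨g', rfl⟩, b', hb', rfl⟩ := hc'
  simp only at heq ⊢
  have hmem : b' * a' ∈ H := hprod b' hb' a' ha'
  have ht : rep g' = rep g := by
    have : (rep g')⁻¹ * g ∈ H := by
      rw [← heq]; simpa [mul_assoc] using hmem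
    rw [← hrep_idem g', hrep_eq g (rep g') this]
  have hab' : b' * a' = (rep g)⁻¹ * g := by
    rw [ht] at heq
    rw [eq_inv_mul_iff_mul_eq, ← mul_assoc, heq]
  have := hu (b', a') ⟨hb', ha', hab'⟩
  rw [Prod.mk.injEq] at this
  rw [this.1, this.2, ht]

private lemma left_down {G : Type*} [Group G] (H : Subgroup G) (A : Set G) (hA : A ⊆ (H : Set G))
    (h : IsLeftFactorIn (Set.univ : Set G) A) : IsLeftFactorIn (H : Set G) A := by
  obtain ⟨B, _hB, _hprod, huniq⟩ := h
  refine ⟨B ∩ (H : Set G), Set.inter_subset_right, fun a ha b hb => H.mul_mem (hA ha) hb.2, ?_⟩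
  intro g hg
  obtain ⟨⟨a, b⟩, ⟨ha, hb, hab⟩, hu⟩ := huniq g trivial
  have hbH : b ∈ (H : Set G) := by
    have : b = a⁻¹ * g := by rw [← hab]; group
    rw [this]; exact H.mul_mem (H.inv_mem (hA ha)) hg
  exact ⟨(a, b), ⟨ha, ⟨hb, hbH⟩, hab⟩, fun p hp => hu p ⟨hp.1, hp.2.1.1, hp.2.2⟩⟩

private lemma right_down {G : Type*} [Group G] (H : Subgroup G) (A : Set G) (hA : A ⊆ (H : Set G))
    (h : IsRightFactorIn (Set.univ : Set G) A) : IsRightFactorIn (H : Set G) A := by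
  obtain ⟨B, _hB, _hprod, huniq⟩ := h
  refine ⟨B ∩ (H : Set G), Set.inter_subset_right, fun b hb a ha => H.mul_mem hb.2 (hA ha), ?_⟩
  intro g hg
  obtain ⟨⟨b, a⟩, ⟨hb, ha, hba⟩, hu⟩ := huniq g trivial
  have hbH : b ∈ (H : Set G) := by
    have : b = g * a⁻¹ := by rw [← hba]; group
    rw [this]; exact H.mul_mem hg (H.inv_mem (hA ha))
  exact ⟨(b, a), ⟨⟨hb, hbH⟩, ha, hba⟩, fun p hp => hu p ⟨hp.1.1, hp.2.1, hp.2.2⟩⟩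

/-- `A` is a factor of `G` if and only if `A` is a factor of the subgroup `⟨A⟩`
generated by `A`. -/
theorem stmt_5 {G : Type*} [Group G] (A : Set G) :
    IsFactorIn (Set.univ : Set G) A ↔ IsFactorIn ((Subgroup.closure A : Subgroup G) : Set G) A := by
  constructor
  · rintro (h | h)
    · exact Or.inl (left_down _ _ Subgroup.subset_closure h)
    · exact Or.inr (right_down _ _ Subgroup.subset_closure h)
  · rintro (h | h)
    · exact Or.inl (left_up _ _ h)
    · exact Or.inr (right_up _ _ h)
end

section
/- Let G be a finite group and A ⊆ G a subset such that |A| does not divide the order of the subgroup ⟨A⟩ generated by A. Then A is not a factor of G. -/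
lemma aux_left {G : Type*} [Group G] (A B : Set G)
    (hAB : IsDirectProdIn (Set.univ : Set G) A B) :
    Nat.card A ∣ Nat.card (Subgroup.closure A : Subgroup G) := by
  set H := Subgroup.closure A with hH
  have hA : A ⊆ (H : Set G) := Subgroup.subset_closure
  have key : Nat.card ((H : Set G) : Set G) =
      Nat.card A * Nat.card (B ∩ (H : Set G) : Set G) := by
    rw [← Nat.card_prod]
    refine Nat.card_congr (Equiv.ofBijective
      (fun p : A × (B ∩ (H : Set G) : Set G) =>
        (⟨p.1.1 * p.2.1, mul_mem (hA p.1.2) p.2.2.2⟩ : (H : Set G))) ⟨?_, ?_⟩).symm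
    · rintro ⟨⟨a1, ha1⟩, ⟨b1, hb1⟩⟩ ⟨⟨a2, ha2⟩, ⟨b2, hb2⟩⟩ heq
      have heq' : a1 * b1 = a2 * b2 := congrArg Subtype.val heq
      obtain ⟨p, -, hu⟩ := hAB.2 (a1 * b1) trivial
      have e1 : (a1, b1) = p := hu (a1, b1) ⟨ha1, hb1.1, rfl⟩
      have e2 : (a2, b2) = p := hu (a2, b2) ⟨ha2, hb2.1, heq'.symm⟩
      have e : (a1, b1) = (a2, b2) := e1.trans e2.symm
      simp only [Prod.mk.injEq] at e
      exact Prod.ext (Subtype.ext e.1) (Subtype.ext e.2)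
    · rintro ⟨g, hg⟩
      obtain ⟨⟨a, b⟩, ⟨ha, hb, hab⟩, -⟩ := hAB.2 g trivial
      have hbH : b ∈ (H : Set G) := by
        have : b = a⁻¹ * g := by rw [← hab]; group
        rw [this]
        exact mul_mem (inv_mem (hA ha)) hg
      exact ⟨(⟨a, ha⟩, ⟨b, hb, hbH⟩), Subtype.ext hab⟩
  have : Nat.card (H : Subgroup G) = Nat.card A * Nat.card (B ∩ (H : Set G) : Set G) := by
    rw [← key]; rfl
  exact ⟨_, this⟩

lemma aux_right {G : Type*} [Group G] (A B : Set G)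
    (hAB : IsDirectProdIn (Set.univ : Set G) B A) :
    Nat.card A ∣ Nat.card (Subgroup.closure A : Subgroup G) := by
  set H := Subgroup.closure A with hH
  have hA : A ⊆ (H : Set G) := Subgroup.subset_closure
  have key : Nat.card ((H : Set G) : Set G) =
      Nat.card (B ∩ (H : Set G) : Set G) * Nat.card A := by
    rw [← Nat.card_prod]
    refine Nat.card_congr (Equiv.ofBijective
      (fun p : (B ∩ (H : Set G) : Set G) × A =>
        (⟨p.1.1 * p.2.1, mul_mem p.1.2.2 (hA p.2.2)⟩ : (H : Set G))) ⟨?_, ?_⟩).symm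
    · rintro ⟨⟨b1, hb1⟩, ⟨a1, ha1⟩⟩ ⟨⟨b2, hb2⟩, ⟨a2, ha2⟩⟩ heq
      have heq' : b1 * a1 = b2 * a2 := congrArg Subtype.val heq
      obtain ⟨p, -, hu⟩ := hAB.2 (b1 * a1) trivial
      have e1 : (b1, a1) = p := hu (b1, a1) ⟨hb1.1, ha1, rfl⟩
      have e2 : (b2, a2) = p := hu (b2, a2) ⟨hb2.1, ha2, heq'.symm⟩
      have e : (b1, a1) = (b2, a2) := e1.trans e2.symm
      simp only [Prod.mk.injEq] at e
      exact Prod.ext (Subtype.ext e.1) (Subtype.ext e.2)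
    · rintro ⟨g, hg⟩
      obtain ⟨⟨b, a⟩, ⟨hb, ha, hab⟩, -⟩ := hAB.2 g trivial
      have hbH : b ∈ (H : Set G) := by
        have : b = g * a⁻¹ := by rw [← hab]; group
        rw [this]
        exact mul_mem hg (inv_mem (hA ha))
      exact ⟨(⟨b, hb, hbH⟩, ⟨a, ha⟩), Subtype.ext hab⟩
  have : Nat.card (H : Subgroup G) = Nat.card (B ∩ (H : Set G) : Set G) * Nat.card A := by
    rw [← key]; rfl
  exact ⟨_, by rw [this, mul_comm]⟩

/-- If `G` is a finite group and `A ⊆ G` is a subset whose cardinality does not divide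
the order of the subgroup `⟨A⟩` generated by `A`, then `A` is not a factor of `G`. -/
theorem stmt_6 {G : Type*} [Group G] [Fintype G] (A : Set G)
    (h : ¬ (Nat.card A ∣ Nat.card (Subgroup.closure A : Subgroup G))) :
    ¬ IsFactorIn (Set.univ : Set G) A := by
  rintro (⟨B, -, hAB⟩ | ⟨B, -, hAB⟩)
  · exact h (aux_left A B hAB)
  · exact h (aux_right A B hAB)
end

section
/- Every subgroup of a finite group with the strong CFS property itself has the strong CFS property. -/
/-- `G = A · B`: every element of `G` can be written in exactly one way as `a * b`
with `a ∈ A` and `b ∈ B`. -/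
def IsDirectProd {G : Type*} [Group G] (A B : Set G) : Prop :=
  ∀ g : G, ∃! p : G × G, p.1 ∈ A ∧ p.2 ∈ B ∧ p.1 * p.2 = g

/-- `A` is a left factor of `G`: there is `B ⊆ G` with `G = A · B`. -/
def IsLeftFactor {G : Type*} [Group G] (A : Set G) : Prop :=
  ∃ B : Set G, IsDirectProd A B

/-- `A` is a right factor of `G`: there is `B ⊆ G` with `G = B · A`. -/
def IsRightFactor {G : Type*} [Group G] (A : Set G) : Prop :=
  ∃ B : Set G, IsDirectProd B A

/-- `A` is a factor of `G`: it is a left factor or a right factor of `G`. -/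
def IsFactor {G : Type*} [Group G] (A : Set G) : Prop :=
  IsLeftFactor A ∨ IsRightFactor A

/-- A group `G` has the strong CFS property if every Lagrange subset of `G`
(i.e. every subset whose cardinality divides `|G|`) is a factor of `G`. -/
def HasStrongCFS (G : Type*) [Group G] : Prop :=
  ∀ A : Set G, Nat.card A ∣ Nat.card G → IsFactor A

/-- Every subgroup of a finite group with the strong CFS property itself has the strong
CFS property. -/
theorem stmt_7 {G : Type*} [Group G] [Finite G] (h : HasStrongCFS G) (H : Subgroup G) :
    HasStrongCFS H := by
  intro A hA
  set A' : Set G := Subtype.val '' A with hA'def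
  have hcard : Nat.card A' = Nat.card A :=
    Nat.card_image_of_injective Subtype.val_injective A
  have hdvd : Nat.card A' ∣ Nat.card G := by
    rw [hcard]
    exact hA.trans H.card_subgroup_dvd_card
  rcases h A' hdvd with ⟨B, hB⟩ | ⟨B, hB⟩
  · left
    refine ⟨{b : H | (b : G) ∈ B}, fun x => ?_⟩
    obtain ⟨⟨a, b⟩, ⟨ha, hb, hab⟩, huniq⟩ := hB (x : G)
    obtain ⟨a₀, ha₀, rfl⟩ := ha
    have hbH : b ∈ H := by
      have : b = (a₀ : G)⁻¹ * (x : G) := by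
        rw [← hab]; group
      rw [this]; exact H.mul_mem (H.inv_mem a₀.2) x.2
    refine ⟨(a₀, ⟨b, hbH⟩), ⟨ha₀, hb, ?_⟩, ?_⟩
    · exact Subtype.ext hab
    · rintro ⟨c, d⟩ ⟨hc, hd, hcd⟩
      have := huniq ((c : G), (d : G)) ⟨⟨c, hc, rfl⟩, hd, congrArg Subtype.val hcd⟩
      have h1 : (c : G) = (a₀ : G) := congrArg Prod.fst this
      have h2 : (d : G) = b := congrArg Prod.snd this
      exact Prod.ext (Subtype.ext h1) (Subtype.ext h2)
  · right
    refine ⟨{b : H | (b : G) ∈ B}, fun x => ?_⟩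
    obtain ⟨⟨b, a⟩, ⟨hb, ha, hab⟩, huniq⟩ := hB (x : G)
    obtain ⟨a₀, ha₀, rfl⟩ := ha
    have hbH : b ∈ H := by
      have : b = (x : G) * (a₀ : G)⁻¹ := by
        rw [← hab]; group
      rw [this]; exact H.mul_mem x.2 (H.inv_mem a₀.2)
    refine ⟨(⟨b, hbH⟩, a₀), ⟨hb, ha₀, ?_⟩, ?_⟩
    · exact Subtype.ext hab
    · rintro ⟨c, d⟩ ⟨hc, hd, hcd⟩
      have := huniq ((c : G), (d : G)) ⟨hc, ⟨d, hd, rfl⟩, congrArg Subtype.val hcd⟩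
      have h1 : (c : G) = b := congrArg Prod.fst this
      have h2 : (d : G) = (a₀ : G) := congrArg Prod.snd this
      exact Prod.ext (Subtype.ext h1) (Subtype.ext h2)
end

section
/- The elementary abelian group C2 × C2 × C2 of order 8 has the strong CFS property. -/
abbrev Gp := Multiplicative (ZMod 2 × ZMod 2 × ZMod 2)

set_option synthInstance.maxSize 10000 in
set_option synthInstance.maxHeartbeats 2000000 in
set_option maxHeartbeats 16000000 in
set_option maxRecDepth 100000 in
lemma key_fact : ∀ s : Finset Gp, s.card ∣ 8 → ∃ t : Finset Gp, s.card * t.card = 8 ∧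
    ∀ a ∈ s, ∀ b ∈ t, ∀ a' ∈ s, ∀ b' ∈ t, a * b = a' * b' → a = a' ∧ b = b' := by decide

lemma card_Gp : Fintype.card Gp = 8 := by
  simp [Fintype.card_prod, ZMod.card]

lemma bridge (A B : Finset Gp) (hcard : A.card * B.card = 8)
    (hinj : ∀ a ∈ A, ∀ b ∈ B, ∀ a' ∈ A, ∀ b' ∈ B, a * b = a' * b' → a = a' ∧ b = b') :
    IsDirectProd (↑A : Set Gp) ↑B := by
  intro g
  have himg : (A ×ˢ B).image (fun p : Gp × Gp => p.1 * p.2) = Finset.univ := by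
    apply Finset.eq_univ_of_card
    rw [Finset.card_image_of_injOn, Finset.card_product, hcard, card_Gp]
    intro p hp q hq hpq
    simp only [Finset.mem_coe, Finset.mem_product] at hp hq
    obtain ⟨h1, h2⟩ := hinj p.1 hp.1 p.2 hp.2 q.1 hq.1 q.2 hq.2 hpq
    exact Prod.ext h1 h2
  have hg : g ∈ (A ×ˢ B).image (fun p : Gp × Gp => p.1 * p.2) := by
    rw [himg]; exact Finset.mem_univ g
  obtain ⟨p, hp, hpg⟩ := Finset.mem_image.mp hg
  rw [Finset.mem_product] at hp
  refine ⟨p, ⟨hp.1, hp.2, hpg⟩, ?_⟩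
  rintro q ⟨hq1, hq2, hqg⟩
  obtain ⟨h1, h2⟩ := hinj q.1 hq1 q.2 hq2 p.1 hp.1 p.2 hp.2 (by rw [hqg, hpg])
  exact Prod.ext h1 h2

/-- The elementary abelian group `C2 × C2 × C2` of order 8 has the strong CFS property. -/
theorem stmt_11 : HasStrongCFS (Multiplicative (ZMod 2 × ZMod 2 × ZMod 2)) := by
  intro A hA
  have hfin : A.Finite := Set.toFinite A
  have hcardG : Nat.card Gp = 8 := by rw [Nat.card_eq_fintype_card, card_Gp]
  have hAcard : Nat.card A = hfin.toFinset.card := by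
    rw [Nat.card_coe_set_eq, Set.ncard_eq_toFinset_card A hfin]
  rw [hcardG, hAcard] at hA
  obtain ⟨t, hmul, hinj⟩ := key_fact hfin.toFinset hA
  left
  refine ⟨↑t, ?_⟩
  have := bridge hfin.toFinset t hmul hinj
  rwa [Set.Finite.coe_toFinset] at this
end

section
/- The elementary abelian group C3 × C3 of order 9 has the strong CFS property. -/
/-- The additive group `ZMod 3 × ZMod 3`. -/
private abbrev V3 := ZMod 3 × ZMod 3

/-- For any two (difference) vectors `x, y` in `ZMod 3 × ZMod 3` there is a nonzero
vector `v` avoiding the "lines" through `x`, `y` and `x - y`. -/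
private lemma line_exists3 : ∀ x y : V3, ∃ v : V3, v ≠ 0 ∧ v ≠ x ∧ v ≠ -x ∧ v ≠ y ∧
    v ≠ -y ∧ v ≠ x - y ∧ v ≠ y - x := by decide

private lemma three_torsion3 : ∀ w : V3, w + w + w = 0 := by decide

/-- Any 3-element subset of `ZMod 3 × ZMod 3` is a (left) direct factor, additively. -/
private lemma core3 (a b c : V3) (hab : a ≠ b) (hac : a ≠ c) (hbc : b ≠ c) :
    ∃ B : Set V3, ∀ g : V3, ∃! p : V3 × V3,
      p.1 ∈ ({a, b, c} : Set V3) ∧ p.2 ∈ B ∧ p.1 + p.2 = g := by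
  obtain ⟨v, hv0, hv1, hv2, hv3, hv4, hv5, hv6⟩ := line_exists3 (b - a) (c - a)
  have h3 := three_torsion3 v
  refine ⟨{0, v, v + v}, ?_⟩
  have key : ∀ p q : V3 × V3, p.1 ∈ ({a,b,c} : Set V3) → p.2 ∈ ({0,v,v+v} : Set V3) →
      q.1 ∈ ({a,b,c} : Set V3) → q.2 ∈ ({0,v,v+v} : Set V3) → p.1 + p.2 = q.1 + q.2 → p = q := by
    intro p q hp1 hp2 hq1 hq2 hsum
    simp only [Set.mem_insert_iff, Set.mem_singleton_iff] at hp1 hp2 hq1 hq2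
    by_cases h1 : p.1 = q.1
    · have h2 : p.2 = q.2 := by
        have := hsum; rw [h1] at this; exact add_left_cancel this
      exact Prod.ext h1 h2
    · exfalso
      have hd : p.1 - q.1 = q.2 - p.2 := by linear_combination hsum
      have hBd : q.2 - p.2 = 0 ∨ q.2 - p.2 = v ∨ q.2 - p.2 = -v := by
        rcases hp2 with h | h | h <;> rcases hq2 with h' | h' | h' <;> rw [h, h'] <;>
          first
            | (left; ring1)
            | (right; left; linear_combination h3)
            | (right; left; linear_combination -h3)
            | (right; left; ring1)
            | (right; right; linear_combination h3)
            | (right; right; linear_combination -h3)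
            | (right; right; ring1)
      have hAd : p.1 - q.1 = b - a ∨ p.1 - q.1 = -(b - a) ∨ p.1 - q.1 = c - a ∨
          p.1 - q.1 = -(c - a) ∨ p.1 - q.1 = (b - a) - (c - a) ∨ p.1 - q.1 = (c - a) - (b - a) := by
        rcases hp1 with h | h | h <;> rcases hq1 with h' | h' | h' <;> rw [h, h'] at h1 ⊢ <;>
          first
            | (exact absurd rfl h1)
            | (left; ring1)
            | (right; left; ring1)
            | (right; right; left; ring1)
            | (right; right; right; left; ring1)
            | (right; right; right; right; left; ring1)
            | (right; right; right; right; right; ring1)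
      rw [hd] at hAd
      have hne0 : q.2 - p.2 ≠ 0 := by
        rw [← hd]; intro h; exact h1 (by linear_combination h)
      rcases hBd with h | h | h
      · exact hne0 h
      · rw [h] at hAd
        rcases hAd with e | e | e | e | e | e
        · exact hv1 e
        · exact hv2 e
        · exact hv3 e
        · exact hv4 e
        · exact hv5 e
        · exact hv6 e
      · rw [h] at hAd
        rcases hAd with e | e | e | e | e | e
        · exact hv2 (by linear_combination -e)
        · exact hv1 (by linear_combination -e)
        · exact hv4 (by linear_combination -e)
        · exact hv3 (by linear_combination -e)
        · exact hv6 (by linear_combination -e)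
        · exact hv5 (by linear_combination -e)
  intro g
  have hvv0 : v + v ≠ 0 := fun h => hv0 (by linear_combination h3 - h)
  have hvvv : v + v ≠ v := fun h => hv0 (by linear_combination h)
  have hcardA : ({a, b, c} : Finset V3).card = 3 := by
    rw [Finset.card_insert_of_notMem (by simp [hab, hac]),
        Finset.card_insert_of_notMem (by simp [hbc]), Finset.card_singleton]
  have hcardB : ({0, v, v + v} : Finset V3).card = 3 := by
    rw [Finset.card_insert_of_notMem (by simp [Ne.symm hv0, Ne.symm hvv0]),
        Finset.card_insert_of_notMem (by simp [Ne.symm hvvv]), Finset.card_singleton]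
  have hinj : Set.InjOn (fun p : V3 × V3 => p.1 + p.2)
      (((({a,b,c} : Finset V3) ×ˢ ({0,v,v+v} : Finset V3)) : Finset (V3 × V3)) : Set (V3 × V3)) := by
    intro p hp q hq h
    simp only [Finset.coe_product, Set.mem_prod, Finset.mem_coe, Finset.mem_insert,
      Finset.mem_singleton] at hp hq
    exact key p q (by simpa using hp.1) (by simpa using hp.2)
      (by simpa using hq.1) (by simpa using hq.2) h
  have himg : Finset.image (fun p : V3 × V3 => p.1 + p.2)
      (({a,b,c} : Finset V3) ×ˢ ({0,v,v+v} : Finset V3)) = Finset.univ := by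
    apply Finset.eq_univ_of_card
    rw [Finset.card_image_of_injOn hinj, Finset.card_product, hcardA, hcardB]
    decide
  have hg : g ∈ Finset.image (fun p : V3 × V3 => p.1 + p.2)
      (({a,b,c} : Finset V3) ×ˢ ({0,v,v+v} : Finset V3)) := by
    rw [himg]; exact Finset.mem_univ g
  obtain ⟨p, hp, hpg⟩ := Finset.mem_image.mp hg
  rw [Finset.mem_product] at hp
  have hp1 : p.1 ∈ ({a,b,c} : Set V3) := by simpa using hp.1
  have hp2 : p.2 ∈ ({0,v,v+v} : Set V3) := by simpa using hp.2
  exact ⟨p, ⟨hp1, hp2, hpg⟩, fun q hq => key q p hq.1 hq.2.1 hp1 hp2 (hq.2.2.trans hpg.symm)⟩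

/-- The elementary abelian group `C3 × C3` of order 9 has the strong CFS property. -/
theorem stmt_12 : HasStrongCFS (Multiplicative (ZMod 3 × ZMod 3)) := by
  intro A hA
  have hcardG : Nat.card (Multiplicative (ZMod 3 × ZMod 3)) = 9 := by
    simp [Nat.card_eq_fintype_card]
  rw [hcardG] at hA
  have hmem : Nat.card A ∈ Nat.divisors 9 := Nat.mem_divisors.mpr ⟨hA, by norm_num⟩
  have hdiv : Nat.divisors 9 = {1, 3, 9} := by decide
  rw [hdiv] at hmem
  simp only [Finset.mem_insert, Finset.mem_singleton] at hmem
  have hnc : A.ncard = Nat.card A := (Nat.card_coe_set_eq A).symm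
  left
  rcases hmem with h1 | h3 | h9
  · -- singleton
    obtain ⟨a, rfl⟩ := Set.ncard_eq_one.mp (hnc.trans h1)
    refine ⟨Set.univ, fun g => ⟨(a, a⁻¹ * g), ⟨rfl, trivial, by group⟩, ?_⟩⟩
    rintro ⟨x, y⟩ ⟨hx, -, hxy⟩
    simp only [Set.mem_singleton_iff] at hx
    subst hx
    simp only [Prod.mk.injEq]
    exact ⟨trivial, by rw [← hxy]; group⟩
  · -- three elements
    obtain ⟨a, b, c, hab, hac, hbc, rfl⟩ := Set.ncard_eq_three.mp (hnc.trans h3)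
    obtain ⟨B, hB⟩ := core3 a.toAdd b.toAdd c.toAdd hab hac hbc
    exact ⟨B, hB⟩
  · -- the whole group
    have huniv : A = Set.univ := by
      apply Set.eq_of_subset_of_ncard_le (Set.subset_univ A)
      rw [Set.ncard_univ, hcardG, hnc, h9]
    subst huniv
    refine ⟨{1}, fun g => ⟨(g, 1), ⟨trivial, rfl, mul_one g⟩, ?_⟩⟩
    rintro ⟨x, y⟩ ⟨-, hy, hxy⟩
    simp only [Set.mem_singleton_iff] at hy
    subst hy
    simp only [Prod.mk.injEq]
    exact ⟨by rw [← hxy]; group, trivial⟩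
end

section
/- Let G = ⟨a⟩ be a finite cyclic group whose order n has a proper divisor d with 3 ≤ d < n. Then the subset A := {1, a², a³, …, a^d} of cardinality d is not a factor of G; in particular, G does not have the strong CFS property. -/
/-- Key lemma: the set `{1, a², …, a^d}` admits no complement `B` with
`G = A · B`. -/
lemma key_aux {G : Type*} [Group G] [Finite G] (a : G)
    (ha : ∀ g : G, g ∈ Subgroup.zpowers a) (d : ℕ)
    (hd3 : 3 ≤ d) (hdn : d < Nat.card G) (B : Set G) :
    ¬ IsDirectProd ({1} ∪ (fun k : ℕ => a ^ k) '' Set.Icc 2 d) B := by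
  intro h
  set A : Set G := {1} ∪ (fun k : ℕ => a ^ k) '' Set.Icc 2 d with hA
  have hord : orderOf a = Nat.card G := by
    rw [← Nat.card_zpowers, (Subgroup.zpowers a).eq_top_iff'.mpr ha, Subgroup.card_top]
  have hinj : ∀ i j : ℕ, i ≤ d → j ≤ d → a ^ i = a ^ j → i = j := by
    intro i j hi hj hij
    have := (pow_eq_pow_iff_modEq.mp hij)
    rwa [Nat.ModEq, Nat.mod_eq_of_lt (by omega : i < orderOf a),
      Nat.mod_eq_of_lt (by omega : j < orderOf a)] at this
  have hmem : ∀ k : ℕ, 2 ≤ k → k ≤ d → a ^ k ∈ A := by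
    intro k h2 hk
    exact Or.inr ⟨k, Set.mem_Icc.mpr ⟨h2, hk⟩, rfl⟩
  have h1A : (1 : G) ∈ A := Or.inl rfl
  -- get some b₀ ∈ B
  obtain ⟨⟨x₀, b₀⟩, ⟨hx₀A, hb₀, hx₀b₀⟩, _⟩ := h 1
  -- representation of a * b₀
  obtain ⟨⟨x, b⟩, ⟨hxA, hbB, hxb⟩, _⟩ := h (a * b₀)
  simp only at hxA hbB hxb
  rcases hxA with hx1 | ⟨k, hk, hxk⟩
  · -- x = 1, so b = a * b₀
    simp only [Set.mem_singleton_iff] at hx1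
    subst hx1
    rw [one_mul] at hxb
    obtain ⟨p, hp, hu⟩ := h (a ^ 3 * b₀)
    have e1 := hu (a ^ 3, b₀) ⟨hmem 3 (by norm_num) hd3, hb₀, rfl⟩
    have e2 := hu (a ^ 2, b) ⟨hmem 2 (by norm_num) (by omega), hbB, by
      simp only; rw [hxb, ← mul_assoc, ← pow_succ]⟩
    have h32 : (a : G) ^ 3 = a ^ 2 := congrArg Prod.fst (e1.trans e2.symm)
    have := hinj 3 2 hd3 (by omega) h32
    omega
  · -- x = a ^ k, 2 ≤ k ≤ d
    simp only at hxk
    rw [Set.mem_Icc] at hk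
    subst hxk
    -- a^(k-1) * b = b₀
    have hkey : a ^ (k - 1) * b = b₀ := by
      apply mul_left_cancel (a := a)
      rw [← mul_assoc, ← pow_succ']
      have : k - 1 + 1 = k := by omega
      rw [this, hxb]
    rcases eq_or_lt_of_le hk.1 with hk2 | hk3
    · -- k = 2 : the element a² b₀ has the two representations (a², b₀) and (a³, b)
      obtain ⟨p, hp, hu⟩ := h (a ^ 2 * b₀)
      have e1 := hu (a ^ 2, b₀) ⟨hmem 2 (by norm_num) (by omega), hb₀, rfl⟩
      have e2 := hu (a ^ 3, b) ⟨hmem 3 (by norm_num) hd3, hbB, by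
        simp only
        have : a ^ 3 = a ^ 2 * a ^ (k - 1) := by rw [← pow_add]; congr 1; omega
        rw [this, mul_assoc, hkey]⟩
      have h23 : (a : G) ^ 2 = a ^ 3 := congrArg Prod.fst (e1.trans e2.symm)
      have := hinj 2 3 (by omega) hd3 h23
      omega
    · -- k ≥ 3 : the element b₀ has the two representations (1, b₀) and (a^(k-1), b)
      obtain ⟨p, hp, hu⟩ := h b₀
      have e1 := hu (1, b₀) ⟨h1A, hb₀, one_mul b₀⟩
      have e2 := hu (a ^ (k - 1), b) ⟨hmem (k - 1) (by omega) (by omega), hbB, hkey⟩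
      have h1k : (1 : G) = a ^ (k - 1) := congrArg Prod.fst (e1.trans e2.symm)
      have := hinj 0 (k - 1) (by omega) (by omega) (by rw [pow_zero]; exact h1k)
      omega

/-- Let `G = ⟨a⟩` be a finite cyclic group whose order `n` has a proper divisor `d` with
`3 ≤ d < n`. Then the subset `A := {1, a², a³, …, a^d}` (of cardinality `d`) is not a
factor of `G`; in particular, `G` does not have the strong CFS property. -/
theorem stmt_13 {G : Type*} [Group G] [Finite G] (a : G)
    (ha : ∀ g : G, g ∈ Subgroup.zpowers a) (d : ℕ)
    (hdvd : d ∣ Nat.card G) (hd3 : 3 ≤ d) (hdn : d < Nat.card G) :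
    ¬ IsFactor ({1} ∪ (fun k : ℕ => a ^ k) '' Set.Icc 2 d) ∧ ¬ HasStrongCFS G := by
  have hcomm : ∀ x y : G, x * y = y * x := by
    intro x y
    obtain ⟨i, hi⟩ := Subgroup.mem_zpowers_iff.mp (ha x)
    obtain ⟨j, hj⟩ := Subgroup.mem_zpowers_iff.mp (ha y)
    rw [← hi, ← hj, ← zpow_add, ← zpow_add, add_comm]
  have hswap : ∀ A B : Set G, IsDirectProd B A → IsDirectProd A B := by
    intro A B hBA g
    obtain ⟨p, ⟨h1, h2, h3⟩, hu⟩ := hBA g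
    refine ⟨(p.2, p.1), ⟨h2, h1, by rw [hcomm]; exact h3⟩, ?_⟩
    rintro ⟨q1, q2⟩ ⟨hq1, hq2, hq3⟩
    have := hu (q2, q1) ⟨hq2, hq1, by rw [hcomm]; exact hq3⟩
    rw [← this]
  have hnot : ¬ IsFactor ({1} ∪ (fun k : ℕ => a ^ k) '' Set.Icc 2 d) := by
    rintro (⟨B, hAB⟩ | ⟨B, hBA⟩)
    · exact key_aux a ha d hd3 hdn B hAB
    · exact key_aux a ha d hd3 hdn B (hswap _ B hBA)
  refine ⟨hnot, fun hcfs => ?_⟩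
  have hord : orderOf a = Nat.card G := by
    rw [← Nat.card_zpowers, (Subgroup.zpowers a).eq_top_iff'.mpr ha, Subgroup.card_top]
  have hinj : ∀ i j : ℕ, i ≤ d → j ≤ d → a ^ i = a ^ j → i = j := by
    intro i j hi hj hij
    have := (pow_eq_pow_iff_modEq.mp hij)
    rwa [Nat.ModEq, Nat.mod_eq_of_lt (by omega : i < orderOf a),
      Nat.mod_eq_of_lt (by omega : j < orderOf a)] at this
  have hcard : Nat.card ({1} ∪ (fun k : ℕ => a ^ k) '' Set.Icc 2 d : Set G) = d := by
    rw [Nat.card_coe_set_eq]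
    rw [Set.ncard_union_eq ?_ (Set.finite_singleton 1) ((Set.finite_Icc 2 d).image _)]
    · rw [Set.ncard_singleton, Set.ncard_image_of_injOn ?_]
      · have : (Set.Icc 2 d).ncard = d - 1 := by
          rw [← Finset.coe_Icc, Set.ncard_coe_finset, Nat.card_Icc]
          omega
        omega
      · intro i hi j hj hij
        rw [Set.mem_Icc] at hi hj
        exact hinj i j hi.2 hj.2 hij
    · rw [Set.disjoint_singleton_left]
      rintro ⟨k, hk, hk1⟩
      rw [Set.mem_Icc] at hk
      have := hinj k 0 hk.2 (by omega) (by rw [pow_zero]; exact hk1)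
      omega
  exact hnot (hcfs _ (by rw [hcard]; exact hdvd))
end

section
/- In the symmetric group S3 on three letters, the two-element subset A := {id, (1 2 3)} is not a factor of S3: there is no three-element subset B of S3 with S3 = A · B or S3 = B · A. In particular, S3 does not have the strong CFS property. -/
lemma aux_r_ne_one : (finRotate 3 : Equiv.Perm (Fin 3)) ≠ 1 := by decide

lemma aux_r_cube : (finRotate 3 : Equiv.Perm (Fin 3)) ^ 3 = 1 := by decide

lemma aux_no_left :
    ¬ ∃ B : Set (Equiv.Perm (Fin 3)),
      IsDirectProd ({1, finRotate 3} : Set (Equiv.Perm (Fin 3))) B := by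
  rintro ⟨B, hB⟩
  set r : Equiv.Perm (Fin 3) := finRotate 3 with hr
  have key : ∀ g, g ∈ B ↔ r⁻¹ * g ∉ B := by
    intro g
    constructor
    · intro hg hrg
      obtain ⟨p, _, hu⟩ := hB g
      have h1 := hu (1, g) ⟨Or.inl rfl, hg, one_mul g⟩
      have h2 := hu (r, r⁻¹ * g) ⟨Or.inr rfl, hrg, by group⟩
      have : (1 : Equiv.Perm (Fin 3)) = r := congrArg Prod.fst (h1.trans h2.symm)
      exact aux_r_ne_one this.symm
    · intro hrg
      obtain ⟨p, ⟨hp1, hp2, hp3⟩, _⟩ := hB g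
      rcases hp1 with h | h
      · have : p.2 = g := by rw [h, one_mul] at hp3; exact hp3
        rwa [this] at hp2
      · exfalso
        apply hrg
        have : p.2 = r⁻¹ * g := by rw [h] at hp3; rw [← hp3]; group
        rwa [this] at hp2
  have a1 := key 1
  have a2 := key (r⁻¹ * 1)
  have a3 := key (r⁻¹ * (r⁻¹ * 1))
  have e3 : r⁻¹ * (r⁻¹ * (r⁻¹ * 1)) = 1 := by
    have h := aux_r_cube
    rw [← hr] at h
    calc r⁻¹ * (r⁻¹ * (r⁻¹ * 1)) = (r ^ 3)⁻¹ := by group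
    _ = 1 := by rw [h]; group
  rw [e3] at a3
  tauto

lemma aux_no_right :
    ¬ ∃ B : Set (Equiv.Perm (Fin 3)),
      IsDirectProd B ({1, finRotate 3} : Set (Equiv.Perm (Fin 3))) := by
  rintro ⟨B, hB⟩
  set r : Equiv.Perm (Fin 3) := finRotate 3 with hr
  have key : ∀ g, g ∈ B ↔ g * r⁻¹ ∉ B := by
    intro g
    constructor
    · intro hg hrg
      obtain ⟨p, _, hu⟩ := hB g
      have h1 := hu (g, 1) ⟨hg, Or.inl rfl, mul_one g⟩
      have h2 := hu (g * r⁻¹, r) ⟨hrg, Or.inr rfl, by group⟩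
      have : (1 : Equiv.Perm (Fin 3)) = r := congrArg Prod.snd (h1.trans h2.symm)
      exact aux_r_ne_one this.symm
    · intro hrg
      obtain ⟨p, ⟨hp1, hp2, hp3⟩, _⟩ := hB g
      rcases hp2 with h | h
      · have : p.1 = g := by rw [h, mul_one] at hp3; exact hp3
        rwa [this] at hp1
      · exfalso
        apply hrg
        have : p.1 = g * r⁻¹ := by rw [h] at hp3; rw [← hp3]; group
        rwa [this] at hp1
  have a1 := key 1
  have a2 := key (1 * r⁻¹)
  have a3 := key (1 * r⁻¹ * r⁻¹)
  have e3 : 1 * r⁻¹ * r⁻¹ * r⁻¹ = 1 := by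
    have h := aux_r_cube
    rw [← hr] at h
    calc 1 * r⁻¹ * r⁻¹ * r⁻¹ = (r ^ 3)⁻¹ := by group
    _ = 1 := by rw [h]; group
  rw [e3] at a3
  tauto

lemma aux_not_factor : ¬ IsFactor ({1, finRotate 3} : Set (Equiv.Perm (Fin 3))) := by
  rintro (⟨B, hB⟩ | ⟨B, hB⟩)
  · exact aux_no_left ⟨B, hB⟩
  · exact aux_no_right ⟨B, hB⟩

/-- In the symmetric group `S3` on three letters, the two-element subset
`A := {id, (1 2 3)}` is not a factor of `S3`: there is no three-element subset `B` of
`S3` with `S3 = A · B` or `S3 = B · A`. In particular, `S3` does not have the strong CFS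
property. -/
theorem stmt_14 :
    ¬ IsFactor ({1, finRotate 3} : Set (Equiv.Perm (Fin 3))) ∧
    (¬ ∃ B : Set (Equiv.Perm (Fin 3)), Nat.card B = 3 ∧
        (IsDirectProd ({1, finRotate 3} : Set (Equiv.Perm (Fin 3))) B ∨
         IsDirectProd B ({1, finRotate 3} : Set (Equiv.Perm (Fin 3))))) ∧
    ¬ HasStrongCFS (Equiv.Perm (Fin 3)) := by
  refine ⟨aux_not_factor, ?_, ?_⟩
  · rintro ⟨B, _, h | h⟩
    · exact aux_no_left ⟨B, h⟩
    · exact aux_no_right ⟨B, h⟩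
  · intro h
    apply aux_not_factor
    apply h
    have hcardA : Nat.card ({1, finRotate 3} : Set (Equiv.Perm (Fin 3))) = 2 := by
      rw [Nat.card_coe_set_eq, Set.ncard_pair aux_r_ne_one.symm]
    have hcardG : Nat.card (Equiv.Perm (Fin 3)) = 6 := by
      rw [Nat.card_eq_fintype_card]
      decide
    rw [hcardA, hcardG]
    norm_num
end

section
/- In the group G = C4 × C2 with generators a of order 4 and b of order 2, the four-element subset A := {1, a, a², b} is not a factor of G: there is no two-element subset B of G with G = A · B or G = B · A. In particular, C4 × C2 does not have the strong CFS property. -/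
abbrev G8 := Multiplicative (ZMod 4 × ZMod 2)

def Pprod (s t : Finset G8) : Prop :=
  ∀ g : G8, ∃ p : G8 × G8, (p.1 ∈ s ∧ p.2 ∈ t ∧ p.1 * p.2 = g) ∧
    ∀ q : G8 × G8, (q.1 ∈ s ∧ q.2 ∈ t ∧ q.1 * q.2 = g) → q = p

set_option synthInstance.maxSize 2000 in
instance (s t : Finset G8) : Decidable (Pprod s t) := by
  unfold Pprod; infer_instance

def Fa : Finset G8 :=
  {1, Multiplicative.ofAdd (1,0), (Multiplicative.ofAdd (1,0) : G8)^2, Multiplicative.ofAdd (0,1)}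

set_option maxHeartbeats 4000000 in
set_option maxRecDepth 10000 in
lemma key : ∀ B : Finset G8, ¬ Pprod Fa B ∧ ¬ Pprod B Fa := by decide

lemma bridge_s15 (s t : Finset G8) : IsDirectProd (G := G8) (↑s) (↑t) ↔ Pprod s t := Iff.rfl

/-- In `G = C4 × C2` with generators `a` of order 4 and `b` of order 2, the four-element
subset `A := {1, a, a², b}` is not a factor of `G`: there is no two-element subset `B`
with `G = A · B` or `G = B · A`. In particular, `C4 × C2` does not have the strong CFS
property. -/
theorem stmt_15 :
    let a : Multiplicative (ZMod 4 × ZMod 2) := Multiplicative.ofAdd (1, 0)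
    let b : Multiplicative (ZMod 4 × ZMod 2) := Multiplicative.ofAdd (0, 1)
    let A : Set (Multiplicative (ZMod 4 × ZMod 2)) := {1, a, a ^ 2, b}
    (¬ IsFactor A) ∧
    (¬ ∃ B : Set (Multiplicative (ZMod 4 × ZMod 2)), Nat.card B = 2 ∧
        (IsDirectProd A B ∨ IsDirectProd B A)) ∧
    ¬ HasStrongCFS (Multiplicative (ZMod 4 × ZMod 2)) := by
  intro a b A
  have hA : A = (↑Fa : Set G8) := by
    simp [A, Fa, a, b, Set.insert_comm]
  have hleft : ∀ B : Set G8, ¬ IsDirectProd A B := by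
    intro B hB
    have hc : (↑(Set.toFinite B).toFinset : Set G8) = B := (Set.toFinite B).coe_toFinset
    rw [hA, ← hc] at hB
    exact (key _).1 ((bridge_s15 _ _).mp hB)
  have hright : ∀ B : Set G8, ¬ IsDirectProd B A := by
    intro B hB
    have hc : (↑(Set.toFinite B).toFinset : Set G8) = B := (Set.toFinite B).coe_toFinset
    rw [hA, ← hc] at hB
    exact (key _).2 ((bridge_s15 _ _).mp hB)
  have hnf : ¬ IsFactor A := by
    rintro (⟨B, hB⟩ | ⟨B, hB⟩)
    · exact hleft B hB
    · exact hright B hB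
  refine ⟨hnf, ?_, ?_⟩
  · rintro ⟨B, -, h | h⟩
    · exact hleft B h
    · exact hright B h
  · intro h
    apply hnf
    apply h
    have h4 : Nat.card A = 4 := by
      rw [hA, Nat.card_coe_set_eq, Set.ncard_coe_finset]
      decide
    have h8 : Nat.card G8 = 8 := by
      rw [Nat.card_eq_fintype_card]; decide
    rw [h4, h8]
    norm_num
end

section
/- In the quaternion group Q8 = {1, −1, i, −i, j, −j, k, −k}, the four-element subset A := {1, −1, i, j} is not a factor of Q8: there is no two-element subset B of Q8 with Q8 = A · B or Q8 = B · A. In particular, Q8 does not have the strong CFS property. -/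
set_option maxRecDepth 10000
open QuaternionGroup


abbrev Q8 := QuaternionGroup 2

def myCheck (A B : Finset Q8) : Prop :=
  ∀ g : Q8, ∃ p ∈ A ×ˢ B, p.1 * p.2 = g ∧ ∀ q ∈ A ×ˢ B, q.1 * q.2 = g → q = p

instance (A B : Finset Q8) : Decidable (myCheck A B) := by unfold myCheck; infer_instance

def AF : Finset Q8 := {a 0, a 2, a 1, xa 0}

lemma key_s16 : ∀ B : Finset Q8, B.card = 2 → ¬ myCheck AF B ∧ ¬ myCheck B AF := by decide

lemma check_of {A B : Finset Q8} (h : IsDirectProd (↑A : Set Q8) (↑B : Set Q8)) : myCheck A B := by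
  intro g
  obtain ⟨p, ⟨pa, pb, pe⟩, uniq⟩ := h g
  refine ⟨p, Finset.mem_product.2 ⟨pa, pb⟩, pe, fun q hq hqe => ?_⟩
  exact uniq q ⟨(Finset.mem_product.1 hq).1, (Finset.mem_product.1 hq).2, hqe⟩

lemma prod_card {G : Type*} [Group G] [Finite G] {A B : Set G}
    (h : IsDirectProd A B) : Nat.card A * Nat.card B = Nat.card G := by
  have hb : Function.Bijective (fun p : A × B => (p.1 : G) * p.2) := by
    constructor
    · rintro ⟨a1, b1⟩ ⟨a2, b2⟩ he
      obtain ⟨p, _, uniq⟩ := h ((a1 : G) * b1)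
      have h1 : ((a1 : G), (b1 : G)) = p := uniq _ ⟨a1.2, b1.2, rfl⟩
      have h2 : ((a2 : G), (b2 : G)) = p := uniq _ ⟨a2.2, b2.2, he.symm⟩
      have := h1.trans h2.symm
      simp only [Prod.mk.injEq] at this
      ext <;> simp [this.1, this.2]
    · intro g
      obtain ⟨p, ⟨pa, pb, pe⟩, _⟩ := h g
      exact ⟨⟨⟨p.1, pa⟩, ⟨p.2, pb⟩⟩, pe⟩
  have := Nat.card_congr (Equiv.ofBijective _ hb)
  simpa [Nat.card_prod] using this

lemma cardQ8 : Nat.card Q8 = 8 := by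
  rw [Nat.card_eq_fintype_card]; decide

lemma cardAF : Nat.card (↑(AF : Finset Q8) : Set Q8) = 4 := by
  rw [Nat.card_coe_set_eq, Set.ncard_coe_finset]; decide

lemma not_dp_left {B : Set Q8} (h : IsDirectProd (↑(AF : Finset Q8)) B) : False := by
  have hc : Nat.card (↑(AF : Finset Q8) : Set Q8) * Nat.card B = Nat.card Q8 := prod_card h
  rw [cardAF, cardQ8] at hc
  have hB2 : Nat.card B = 2 := by omega
  have hfin := B.toFinite
  have hcoe : (↑hfin.toFinset : Set Q8) = B := hfin.coe_toFinset
  have hcard : hfin.toFinset.card = 2 := by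
    rw [← hB2, Nat.card_coe_set_eq, Set.ncard_eq_toFinset_card B hfin]
  exact (key_s16 _ hcard).1 (check_of (by rw [hcoe]; exact h))

lemma not_dp_right {B : Set Q8} (h : IsDirectProd B (↑(AF : Finset Q8))) : False := by
  have hc : Nat.card B * Nat.card (↑(AF : Finset Q8) : Set Q8) = Nat.card Q8 := prod_card h
  rw [cardAF, cardQ8] at hc
  have hB2 : Nat.card B = 2 := by omega
  have hfin := B.toFinite
  have hcoe : (↑hfin.toFinset : Set Q8) = B := hfin.coe_toFinset
  have hcard : hfin.toFinset.card = 2 := by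
    rw [← hB2, Nat.card_coe_set_eq, Set.ncard_eq_toFinset_card B hfin]
  exact (key_s16 _ hcard).2 (check_of (by rw [hcoe]; exact h))

lemma setA_eq : ({QuaternionGroup.a 0, QuaternionGroup.a 2, QuaternionGroup.a 1,
    QuaternionGroup.xa 0} : Set Q8) = ↑(AF : Finset Q8) := by
  ext x; simp [AF]

lemma main :
    (¬ IsFactor ({QuaternionGroup.a 0, QuaternionGroup.a 2, QuaternionGroup.a 1,
        QuaternionGroup.xa 0} : Set Q8)) ∧
    (¬ ∃ B : Set Q8, Nat.card B = 2 ∧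
        (IsDirectProd ({QuaternionGroup.a 0, QuaternionGroup.a 2, QuaternionGroup.a 1,
          QuaternionGroup.xa 0} : Set Q8) B ∨
         IsDirectProd B ({QuaternionGroup.a 0, QuaternionGroup.a 2, QuaternionGroup.a 1,
          QuaternionGroup.xa 0} : Set Q8))) ∧
    ¬ HasStrongCFS Q8 := by
  rw [setA_eq]
  refine ⟨?_, ?_, ?_⟩
  · rintro (⟨B, hB⟩ | ⟨B, hB⟩)
    · exact not_dp_left hB
    · exact not_dp_right hB
  · rintro ⟨B, -, (hB | hB)⟩
    · exact not_dp_left hB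
    · exact not_dp_right hB
  · intro h
    rcases h _ (by rw [cardAF, cardQ8]; norm_num) with (⟨B, hB⟩ | ⟨B, hB⟩)
    · exact not_dp_left hB
    · exact not_dp_right hB


/-- In the quaternion group `Q8 = {1, −1, i, −i, j, −j, k, −k}` (realized in Mathlib as
`QuaternionGroup 2`, where `1 = a 0`, `−1 = a 2`, `i = a 1`, `j = xa 0`), the
four-element subset `A := {1, −1, i, j}` is not a factor of `Q8`: there is no two-element
subset `B` with `Q8 = A · B` or `Q8 = B · A`. In particular, `Q8` does not have the
strong CFS property. -/
theorem stmt_16 :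
    let A : Set (QuaternionGroup 2) :=
      {QuaternionGroup.a 0, QuaternionGroup.a 2, QuaternionGroup.a 1, QuaternionGroup.xa 0}
    (¬ IsFactor A) ∧
    (¬ ∃ B : Set (QuaternionGroup 2), Nat.card B = 2 ∧
        (IsDirectProd A B ∨ IsDirectProd B A)) ∧
    ¬ HasStrongCFS (QuaternionGroup 2) := by
  intro A
  exact main
end

section
/- In the group G = C5 × C5 with commuting generators a, b of order 5, the five-element subset A := {1, a, a², b, a²b} is not a factor of G: there is no five-element subset B of G with G = A · B or G = B · A. In particular, C5 × C5 does not have the strong CFS property. -/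
abbrev G5 := Multiplicative (ZMod 5 × ZMod 5)

def ga : G5 := Multiplicative.ofAdd (1, 0)
def gb : G5 := Multiplicative.ofAdd (0, 1)

def AA : Set G5 := {1, ga, ga ^ 2, gb, ga ^ 2 * gb}

lemma swap_prod {G : Type*} [CommGroup G] {A B : Set G} (h : IsDirectProd A B) :
    IsDirectProd B A := by
  intro g
  obtain ⟨⟨x, y⟩, ⟨hx, hy, hxy⟩, hu⟩ := h g
  refine ⟨(y, x), ⟨hy, hx, by rw [mul_comm]; exact hxy⟩, ?_⟩
  rintro ⟨y', x'⟩ ⟨hy', hx', hxy'⟩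
  have := hu (x', y') ⟨hx', hy', by rw [mul_comm]; exact hxy'⟩
  simp only [Prod.mk.injEq] at this ⊢
  exact ⟨this.2, this.1⟩

lemma step (c a' a'' b b₀ : G5)
    (hab : c * b = Multiplicative.ofAdd ((3 : ZMod 5), (0 : ZMod 5)) * b₀)
    (hc : a' * c⁻¹ * Multiplicative.ofAdd ((3 : ZMod 5), (0 : ZMod 5)) = a'') :
    a' * b = a'' * b₀ := by
  have hb : b = c⁻¹ * (Multiplicative.ofAdd ((3 : ZMod 5), (0 : ZMod 5)) * b₀) := by
    rw [← hab, inv_mul_cancel_left]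
  rw [hb, ← hc]
  group

lemma key_s17 (B : Set G5) (h : IsDirectProd AA B) : False := by
  have clash : ∀ a' a'' : G5, a' ∈ AA → a'' ∈ AA → a' ≠ a'' →
      ∀ b' b'' : G5, b' ∈ B → b'' ∈ B → a' * b' = a'' * b'' → False := by
    intro a' a'' h1 h2 hne b' b'' hb' hb'' heq
    obtain ⟨q, -, hu⟩ := h (a' * b')
    have e1 := hu (a', b') ⟨h1, hb', rfl⟩
    have e2 := hu (a'', b'') ⟨h2, hb'', heq.symm⟩
    exact hne (congrArg Prod.fst (e1.trans e2.symm))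
  obtain ⟨⟨a₀, b₀⟩, ⟨ha₀, hb₀, hab₀⟩, -⟩ := h 1
  obtain ⟨⟨a, b⟩, ⟨ha, hb, hab⟩, -⟩ :=
    h (Multiplicative.ofAdd ((3 : ZMod 5), (0 : ZMod 5)) * b₀)
  dsimp only at ha hb hab
  simp only [AA, Set.mem_insert_iff, Set.mem_singleton_iff] at ha
  have m1 : (1 : G5) ∈ AA := Or.inl rfl
  have m2 : ga ∈ AA := Or.inr (Or.inl rfl)
  have m3 : ga ^ 2 ∈ AA := Or.inr (Or.inr (Or.inl rfl))
  have m4 : gb ∈ AA := Or.inr (Or.inr (Or.inr (Or.inl rfl)))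
  have m5 : ga ^ 2 * gb ∈ AA := Or.inr (Or.inr (Or.inr (Or.inr rfl)))
  rcases ha with rfl | rfl | rfl | rfl | rfl
  · exact clash (ga ^ 2) 1 m3 m1 (by decide) b b₀ hb hb₀ (step _ _ _ _ _ hab (by decide))
  · exact clash 1 (ga ^ 2) m1 m3 (by decide) b b₀ hb hb₀ (step _ _ _ _ _ hab (by decide))
  · exact clash 1 ga m1 m2 (by decide) b b₀ hb hb₀ (step _ _ _ _ _ hab (by decide))
  · exact clash (ga ^ 2 * gb) 1 m5 m1 (by decide) b b₀ hb hb₀ (step _ _ _ _ _ hab (by decide))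
  · exact clash gb ga m4 m2 (by decide) b b₀ hb hb₀ (step _ _ _ _ _ hab (by decide))

lemma cardAA : Nat.card AA = 5 := by
  have : AA = (({1, ga, ga ^ 2, gb, ga ^ 2 * gb} : Finset G5) : Set G5) := by
    simp [AA]
  rw [Nat.card_coe_set_eq, this, Set.ncard_coe_finset]
  decide

/-- In `G = C5 × C5` with commuting generators `a, b` of order 5, the five-element subset
`A := {1, a, a², b, a²b}` is not a factor of `G`: there is no five-element subset `B`
with `G = A · B` or `G = B · A`. In particular, `C5 × C5` does not have the strong CFS
property. -/
theorem stmt_17 :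
    let a : Multiplicative (ZMod 5 × ZMod 5) := Multiplicative.ofAdd (1, 0)
    let b : Multiplicative (ZMod 5 × ZMod 5) := Multiplicative.ofAdd (0, 1)
    let A : Set (Multiplicative (ZMod 5 × ZMod 5)) := {1, a, a ^ 2, b, a ^ 2 * b}
    (¬ IsFactor A) ∧
    (¬ ∃ B : Set (Multiplicative (ZMod 5 × ZMod 5)), Nat.card B = 5 ∧
        (IsDirectProd A B ∨ IsDirectProd B A)) ∧
    ¬ HasStrongCFS (Multiplicative (ZMod 5 × ZMod 5)) := by
  intro a b A
  have hA : A = AA := rfl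
  have main : ¬ IsFactor A := by
    rw [hA]
    rintro (⟨B, hB⟩ | ⟨B, hB⟩)
    · exact key_s17 B hB
    · exact key_s17 B (swap_prod hB)
  refine ⟨main, ?_, ?_⟩
  · rintro ⟨B, -, hB | hB⟩
    · exact key_s17 B (hA ▸ hB)
    · exact key_s17 B (swap_prod (hA ▸ hB))
  · intro hcfs
    apply main
    apply hcfs
    rw [hA, cardAA, Nat.card_eq_fintype_card]
    decide
end

section
/- For a finite group G, the following statements are equivalent: (i) every Lagrange subset of G is a factor of G (the strong CFS property); (ii) every Lagrange subset of G is a left factor of G; (iii) every Lagrange subset of G is a right factor of G; (iv) every Lagrange subset of G is both a left factor and a right factor of G; (v) for every Lagrange subset A of G there exists a subset B ⊆ G with G = A · B and G = B · A. -/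
/-!
The strong CFS property forces `G` to be abelian, and in an abelian group `G = A · B` and
`G = B · A` say the same thing; the other implications are formal.

A factor contained in a subgroup `H` has cardinality dividing `|H|`. Applied to a `q`-element
subset of a cyclic subgroup of prime order `p > q`, this shows that `|G| = p ^ n` is a prime
power, with `n ≥ 3` if `G` is not abelian. Lagrange subsets that are not factors are then obtained
by exchanging one or two elements of a subgroup `H` for elements outside `H`. If such an `A`
satisfies `G = A · C`, then `C` meets every right coset of `H` at most once, because `H ∩ A` fills
more than half of `H`; so every `c ∈ C` is `y c'` with `y ∈ A \ H` and `c' ∈ C`. This is impossible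
* for `A = (H \ {1}) ∪ {y}` when some power of `y` lies in `H \ {1}`, as `C` would be stable
  under `y⁻¹`. If `|G| = 8`, squares are central, and we take for `H` the centralizer of some `w`
  not commuting with a `y` with `y ^ 2 ≠ 1`;
* for `A = (H \ {1, h₁}) ∪ {x, x h}` when `x ∉ H` normalizes `H`, `h ∈ H \ {1}` and `h₁` avoids
  `h^{±1}` and `x h^{±1} x⁻¹`, as `x h x⁻¹, x h⁻¹ x⁻¹ ∈ A` yield a second factorization (for
  right factors, `h, h⁻¹ ∈ A` play this role). If `|G| ≠ 8`, take `|H| = p ^ (n - 1) ≥ 6` and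
  `x` from the normalizer condition of the nilpotent group `G`.

Right factors reduce to left factors through `A ↦ A⁻¹`.
-/

open Subgroup

theorem Nat.six_le_pow_pred {p n : ℕ} (hp : p.Prime) (hn : 3 ≤ n) (h8 : p ^ n ≠ 8) :
    6 ≤ p ^ (n - 1) := by
  rcases hp.two_le.eq_or_lt with rfl | hp3
  · have : 4 ≤ n := by
      by_contra! h
      exact h8 (by rw [show n = 3 by omega]; norm_num)
    calc 6 ≤ 2 ^ 3 := by norm_num
      _ ≤ 2 ^ (n - 1) := Nat.pow_le_pow_right two_pos (by omega)
  · calc 6 ≤ 3 ^ 2 := by norm_num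
      _ ≤ p ^ 2 := Nat.pow_le_pow_left hp3 2
      _ ≤ p ^ (n - 1) := Nat.pow_le_pow_right hp.pos (by omega)

theorem Set.ncard_sdiff_union_of_ncard_eq {α : Type*} [Finite α] {U S T : Set α} (hSU : S ⊆ U)
    (hTU : Disjoint T U) (hST : S.ncard = T.ncard) : (U \ S ∪ T).ncard = U.ncard := by
  have hS := Set.ncard_le_ncard hSU
  rw [Set.ncard_union_eq (hTU.symm.mono_left Set.sdiff_subset), Set.ncard_sdiff hSU]
  omega

section

variable {G : Type*} [Group G] {A B : Set G}

theorem IsDirectProd.inv (h : IsDirectProd A B) : IsDirectProd B⁻¹ A⁻¹ := by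
  intro g
  obtain ⟨⟨a, b⟩, ⟨ha, hb, hab⟩, huniq⟩ := h g⁻¹
  refine ⟨(b⁻¹, a⁻¹), ⟨by simpa using hb, by simpa using ha, by simp [← mul_inv_rev, hab]⟩, ?_⟩
  rintro ⟨b', a'⟩ ⟨hb', ha', hab'⟩
  have := huniq (a'⁻¹, b'⁻¹) ⟨ha', hb', by simp [← mul_inv_rev, hab']⟩
  simp only [Prod.mk.injEq] at this ⊢
  simp [← this.1, ← this.2]

theorem IsDirectProd.symm [IsMulCommutative G] (h : IsDirectProd A B) : IsDirectProd B A := by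
  intro g
  obtain ⟨⟨a, b⟩, ⟨ha, hb, hab⟩, huniq⟩ := h g
  refine ⟨(b, a), ⟨hb, ha, mul_comm' b a ▸ hab⟩, ?_⟩
  rintro ⟨b', a'⟩ ⟨hb', ha', hab'⟩
  have := huniq (a', b') ⟨ha', hb', mul_comm' a' b' ▸ hab'⟩
  simp only [Prod.mk.injEq] at this ⊢
  exact ⟨this.2, this.1⟩

theorem IsRightFactor.isLeftFactor_inv (h : IsRightFactor A) : IsLeftFactor A⁻¹ :=
  let ⟨_, hB⟩ := h; ⟨_, hB.inv⟩

theorem IsLeftFactor.card_dvd_of_subset {H : Subgroup G} (hAH : A ⊆ H) (h : IsLeftFactor A) :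
    Nat.card A ∣ Nat.card H := by
  obtain ⟨C, hC⟩ := h
  let f : A × ↥(C ∩ H) → H := fun p => ⟨p.1 * p.2, H.mul_mem (hAH p.1.2) p.2.2.2⟩
  have hf : Function.Bijective f := by
    refine ⟨fun ⟨a, c⟩ ⟨a', c'⟩ hac => ?_, fun ⟨g, hg⟩ => ?_⟩
    · have := (hC (a * c)).unique (y₁ := (a, c)) (y₂ := (a', c')) ⟨a.2, c.2.1, rfl⟩
        ⟨a'.2, c'.2.1, (congrArg Subtype.val hac).symm⟩
      simp only [Prod.mk.injEq] at this
      ext <;> simp [this.1, this.2]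
    · obtain ⟨⟨a, c⟩, ⟨ha, hc, rfl⟩, -⟩ := hC g
      have hcH : c ∈ H := by simpa using H.mul_mem (H.inv_mem (hAH ha)) hg
      exact ⟨(⟨a, ha⟩, ⟨c, hc, hcH⟩), rfl⟩
  exact ⟨Nat.card ↥(C ∩ H), by rw [← Nat.card_prod, Nat.card_eq_of_bijective f hf]⟩

theorem IsFactor.card_dvd_of_subset {H : Subgroup G} (hAH : A ⊆ H) (h : IsFactor A) :
    Nat.card A ∣ Nat.card H := by
  rcases h with h | h
  · exact h.card_dvd_of_subset hAH
  · have hAH' : A⁻¹ ⊆ H := fun x hx => by simpa using H.inv_mem (hAH hx)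
    simpa [Nat.card_coe_set_eq, Set.ncard_inv] using h.isLeftFactor_inv.card_dvd_of_subset hAH'

theorem Subgroup.ncard_sdiff_inv (H : Subgroup G) (A : Set G) :
    (↑H \ A⁻¹).ncard = (↑H \ A).ncard := by
  rw [← Set.ncard_inv (↑H \ A)]
  congr 1
  ext x
  simp

theorem isMulCommutative_of_card_eq_prime_pow {p n : ℕ} [Fact p.Prime]
    (hcard : Nat.card G = p ^ n) (hn : n ≤ 2) : IsMulCommutative G := by
  interval_cases n
  · have := (Nat.card_eq_one_iff_unique.mp (by simpa using hcard)).1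
    exact ⟨⟨fun a b => Subsingleton.elim _ _⟩⟩
  · have := isCyclic_of_prime_card (p := p) (by simpa using hcard)
    infer_instance
  · exact IsPGroup.isMulCommutative_of_card_eq_prime_sq hcard

theorem exists_not_commute_sq_ne_one {u v : G} (huv : ¬Commute u v) :
    ∃ a w : G, ¬Commute a w ∧ a ^ 2 ≠ 1 := by
  by_cases hu : u ^ 2 = 1
  · by_cases hv : v ^ 2 = 1
    · have inv_self : ∀ g : G, g ^ 2 = 1 → g⁻¹ = g := fun g hg =>
        inv_eq_of_mul_eq_one_right (by rwa [← sq])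
      refine ⟨u * v, u, fun h => huv ?_, fun h => huv ?_⟩
      · simpa using ((Commute.refl u).inv_left.mul_left h).symm
      · have := inv_self _ h
        rw [mul_inv_rev, inv_self u hu, inv_self v hv] at this
        exact this.symm
    · exact ⟨v, u, fun h => huv h.symm, hv⟩
  · exact ⟨u, v, huv, hu⟩

variable [Finite G] {H : Subgroup G} {C : Set G}

theorem HasStrongCFS.eq_minFac_of_prime_dvd (hG : HasStrongCFS G) {q : ℕ}
    (hq : q.Prime) (hqG : q ∣ Nat.card G) : q = (Nat.card G).minFac := by
  set p := (Nat.card G).minFac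
  have : Fact q.Prime := ⟨hq⟩
  obtain ⟨z, hz⟩ := exists_prime_orderOf_dvd_card' q hqG
  obtain ⟨A, hAz, hA⟩ := Set.exists_subset_card_eq (s := (zpowers z : Set G)) (n := p)
    (by rw [← Nat.card_coe_set_eq, SetLike.coe_sort_coe, Nat.card_zpowers, hz]
        exact Nat.minFac_le_of_dvd hq.two_le hqG)
  have hA' : Nat.card A = p := by rw [Nat.card_coe_set_eq, hA]
  have hpq' : p ∣ q := by
    simpa [hA', hz] using (hG A (hA' ▸ Nat.minFac_dvd _)).card_dvd_of_subset hAz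
  have hp : p.Prime := Nat.minFac_prime fun h => hq.one_lt.ne' (Nat.dvd_one.mp (h ▸ hqG))
  exact ((hq.eq_one_or_self_of_dvd p hpq').resolve_left hp.one_lt.ne').symm

theorem IsDirectProd.eq_of_mul_inv_mem (hAC : IsDirectProd A C)
    (hHA : 2 * (↑H \ A).ncard < Nat.card H) {c c' : G} (hc : c ∈ C) (hc' : c' ∈ C)
    (hcc' : c' * c⁻¹ ∈ H) : c' = c := by
  by_contra hne
  set B : Set G := ↑H ∩ A
  have hdisj : Disjoint B ((· * (c' * c⁻¹)) '' B) := by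
    refine Set.disjoint_left.mpr fun b hb ⟨b', hb', hbb'⟩ => hne ?_
    have := (hAC (b * c)).unique (y₁ := (b, c)) (y₂ := (b', c')) ⟨hb.2, hc, rfl⟩
      ⟨hb'.2, hc', by rw [← hbb']; group⟩
    exact (congrArg Prod.snd this).symm
  have hsub : B ∪ (· * (c' * c⁻¹)) '' B ⊆ H := by
    rintro _ (hb | ⟨b, hb, rfl⟩)
    exacts [hb.1, H.mul_mem hb.1 hcc']
  have hle := Set.ncard_le_ncard hsub
  rw [Set.ncard_union_eq hdisj, Set.ncard_image_of_injective _ (mul_left_injective _)] at hle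
  have : B.ncard + (↑H \ A).ncard = (H : Set G).ncard :=
    Set.ncard_inter_add_ncard_sdiff_eq_ncard _ _
  have hH : (H : Set G).ncard = Nat.card H := (Nat.card_coe_set_eq _).symm
  omega

theorem IsDirectProd.exists_inv_mul_mem (hAC : IsDirectProd A C) (hA1 : 1 ∉ A)
    (hHA : 2 * (↑H \ A).ncard < Nat.card H) {c : G} (hc : c ∈ C) :
    ∃ y ∈ A, y ∉ H ∧ y⁻¹ * c ∈ C := by
  obtain ⟨⟨y, c'⟩, ⟨hy, hc', rfl⟩, -⟩ := hAC c
  refine ⟨y, hy, fun hyH => hA1 ?_, by simpa using hc'⟩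
  have := hAC.eq_of_mul_inv_mem hHA hc' hc (by simpa using hyH)
  exact mul_eq_right.mp this ▸ hy

theorem not_isLeftFactor_of_pow_mem (hA1 : 1 ∉ A) (hHA : 2 * (↑H \ A).ncard < Nat.card H)
    {y : G} (hAH : ∀ a ∈ A, a ∉ H → a = y) {k : ℕ} (hk : y ^ k ∈ H) (hk1 : y ^ k ≠ 1) :
    ¬IsLeftFactor A := by
  rintro ⟨C, hAC⟩
  have hstep : ∀ c ∈ C, y⁻¹ * c ∈ C := fun c hc => by
    obtain ⟨a, ha, haH, hac⟩ := hAC.exists_inv_mul_mem hA1 hHA hc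
    rwa [hAH a ha haH] at hac
  have hpow : ∀ n : ℕ, ∀ c ∈ C, (y ^ n)⁻¹ * c ∈ C := by
    intro n
    induction n with
    | zero => simp
    | succ n ih => intro c hc; simpa [pow_succ, mul_assoc] using hstep _ (ih c hc)
  obtain ⟨⟨_, c⟩, ⟨-, hc, -⟩, -⟩ := hAC 1
  have := hAC.eq_of_mul_inv_mem hHA hc (hpow k c hc) (by simpa using H.inv_mem hk)
  exact hk1 (by simpa using this)

theorem not_isFactor_of_pow_mem (hA1 : 1 ∉ A) (hHA : 2 * (↑H \ A).ncard < Nat.card H)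
    {y : G} (hAH : ∀ a ∈ A, a ∉ H → a = y) {k : ℕ} (hk : y ^ k ∈ H) (hk1 : y ^ k ≠ 1) :
    ¬IsFactor A := by
  rintro (h | h)
  · exact not_isLeftFactor_of_pow_mem hA1 hHA hAH hk hk1 h
  · refine not_isLeftFactor_of_pow_mem (A := A⁻¹) (H := H) (y := y⁻¹) (by simpa)
      (by rwa [H.ncard_sdiff_inv]) (fun a ha haH => ?_) (by simpa using H.inv_mem hk) (by simpa)
      h.isLeftFactor_inv
    rw [← hAH _ ha (by simpa using haH), inv_inv]

theorem not_isLeftFactor_of_mul_inv_mem (hA1 : 1 ∉ A) (hHA : 2 * (↑H \ A).ncard < Nat.card H)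
    (hA : ∀ y ∈ A, y ∉ H → ∃ y' ∈ A, y' * y⁻¹ ∈ A) : ¬IsLeftFactor A := by
  rintro ⟨C, hAC⟩
  obtain ⟨⟨_, c⟩, ⟨-, hc, -⟩, -⟩ := hAC 1
  obtain ⟨y, hy, hyH, hyc⟩ := hAC.exists_inv_mul_mem hA1 hHA hc
  obtain ⟨y', hy', hy'y⟩ := hA y hy hyH
  have := (hAC (y' * (y⁻¹ * c))).unique (y₁ := (y', y⁻¹ * c)) (y₂ := (y' * y⁻¹, c))
    ⟨hy', hyc, rfl⟩ ⟨hy'y, hc, by group⟩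
  have hy1 : y' = y' * y⁻¹ := congrArg Prod.fst this
  exact hyH (by rw [inv_eq_one.mp (left_eq_mul.mp hy1)]; exact H.one_mem)

theorem not_isFactor_of_mul_inv_mem (hA1 : 1 ∉ A) (hHA : 2 * (↑H \ A).ncard < Nat.card H)
    (hleft : ∀ y ∈ A, y ∉ H → ∃ y' ∈ A, y' * y⁻¹ ∈ A)
    (hright : ∀ y ∈ A, y ∉ H → ∃ y' ∈ A, y⁻¹ * y' ∈ A) : ¬IsFactor A := by
  rintro (h | h)
  · exact not_isLeftFactor_of_mul_inv_mem hA1 hHA hleft h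
  · refine not_isLeftFactor_of_mul_inv_mem (A := A⁻¹) (H := H) (by simpa)
      (by rwa [H.ncard_sdiff_inv]) (fun y hy hyH => ?_) h.isLeftFactor_inv
    obtain ⟨y', hy', hyy'⟩ := hright y⁻¹ hy (by simpa using hyH)
    exact ⟨y'⁻¹, by simpa using hy', by simpa using hyy'⟩

theorem not_hasStrongCFS_of_not_commute {a w : G} (haw : ¬Commute a w) (ha : a ^ 2 ≠ 1)
    (hw : Commute (a ^ 2) w) : ¬HasStrongCFS G := by
  set H := centralizer {w}
  have hmem : ∀ g, g ∈ H ↔ Commute g w := fun g => mem_centralizer_singleton_iff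
  have ha1 : a ≠ 1 := by rintro rfl; simp at ha
  have hw1 : w ≠ 1 := by rintro rfl; exact haw (Commute.one_right a)
  have hwa : w ≠ a ^ 2 := by rintro rfl; exact haw (Commute.self_pow a 2)
  have hH : 3 ≤ Nat.card H := by
    have h3 : ({1, w, a ^ 2} : Set G).ncard = 3 :=
      Set.ncard_eq_three.mpr ⟨1, w, a ^ 2, hw1.symm, ha.symm, hwa, rfl⟩
    have : ({1, w, a ^ 2} : Set G) ⊆ H := by
      simp only [Set.insert_subset_iff, Set.singleton_subset_iff, SetLike.mem_coe, hmem]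
      exact ⟨Commute.one_left w, Commute.refl w, hw⟩
    rw [← h3, ← SetLike.coe_sort_coe, Nat.card_coe_set_eq]
    exact Set.ncard_le_ncard this
  set A : Set G := ↑H \ {1} ∪ {a}
  have hA : Nat.card A = Nat.card H := by
    rw [Nat.card_coe_set_eq, Set.ncard_sdiff_union_of_ncard_eq (by simp)
      (by simpa [hmem] using haw) (by simp), ← Nat.card_coe_set_eq]
    rfl
  have hHA : (↑H \ A).ncard ≤ 1 := by
    grw [← Set.ncard_singleton (1 : G)]
    exact Set.ncard_le_ncard fun g hg => by_contra fun hg1 => hg.2 (Or.inl ⟨hg.1, hg1⟩)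
  intro hG
  refine not_isFactor_of_pow_mem (H := H) (y := a) (k := 2) ?_ (by omega) ?_ ?_ ha
    (hG A (hA ▸ H.card_subgroup_dvd_card))
  · simp [A, ha1.symm]
  · rintro g (hg | rfl) hgH
    exacts [absurd hg.1 hgH, rfl]
  · exact (hmem _).mpr hw

theorem not_hasStrongCFS_of_mem_normalizer {H : Subgroup G} (hH : 6 ≤ Nat.card H) {x : G}
    (hx : x ∈ normalizer (H : Set G)) (hxH : x ∉ H) : ¬HasStrongCFS G := by
  have hHn : (H : Set G).ncard = Nat.card H := (Nat.card_coe_set_eq _).symm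
  have hconj : ∀ g ∈ H, x * g * x⁻¹ ∈ H := fun g => (mem_normalizer_iff.mp hx g).mp
  obtain ⟨h, hh, hh1⟩ : ∃ h ∈ (H : Set G), h ∉ ({1} : Set G) :=
    Set.exists_mem_notMem_of_ncard_lt_ncard (by rw [Set.ncard_singleton]; omega)
  obtain ⟨h₁, hh₁, hh₁S⟩ : ∃ h₁ ∈ (H : Set G),
      h₁ ∉ ({1, h, h⁻¹, x * h * x⁻¹, x * h⁻¹ * x⁻¹} : Set G) :=
    Set.exists_mem_notMem_of_ncard_lt_ncard (by
      grw [Set.ncard_insert_le, Set.ncard_insert_le, Set.ncard_insert_le, Set.ncard_insert_le,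
        Set.ncard_singleton]
      omega)
  simp only [Set.mem_insert_iff, Set.mem_singleton_iff, not_or] at hh1 hh₁S
  obtain ⟨h₁_ne_one, h₁_ne_h, h₁_ne_inv, h₁_ne_conj, h₁_ne_conj_inv⟩ := hh₁S
  have hxh : x * h ∉ H := fun hxh => hxH (by simpa using H.mul_mem hxh (H.inv_mem hh))
  set A : Set G := ↑H \ {1, h₁} ∪ {x, x * h}
  have hmem : ∀ g ∈ H, g ≠ 1 → g ≠ h₁ → g ∈ A := fun g hg hg1 hgh₁ =>
    Or.inl ⟨hg, by simp [hg1, hgh₁]⟩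
  have hAH : ∀ y ∈ A, y ∉ H → y = x ∨ y = x * h := by
    rintro y (hy | hy) hyH
    exacts [absurd hy.1 hyH, hy]
  have hA : Nat.card A = Nat.card H := by
    rw [Nat.card_coe_set_eq, Set.ncard_sdiff_union_of_ncard_eq
      (by simp [Set.insert_subset_iff, hh₁]) (by simp [hxH, hxh]), hHn]
    rw [Set.ncard_pair (Ne.symm h₁_ne_one), Set.ncard_pair (by simpa using hh1)]
  have hHA : (↑H \ A).ncard ≤ 2 := by
    grw [← Set.ncard_pair (Ne.symm h₁_ne_one)]
    exact Set.ncard_le_ncard fun g hg => by_contra fun hg1 => hg.2 (Or.inl ⟨hg.1, hg1⟩)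
  intro hG
  refine not_isFactor_of_mul_inv_mem (H := H) (A := A) ?_ (by omega) ?_ ?_
    (hG A (hA ▸ H.card_subgroup_dvd_card))
  · rintro (⟨-, h1⟩ | h1 | h1)
    exacts [h1 (Or.inl rfl), hxH (h1 ▸ H.one_mem), hxh (h1 ▸ H.one_mem)]
  · intro y hy hyH
    rcases hAH y hy hyH with rfl | rfl
    · exact ⟨y * h, Or.inr (Or.inr rfl),
        hmem _ (hconj h hh) (by simpa using hh1) (Ne.symm h₁_ne_conj)⟩
    · refine ⟨x, Or.inr (Or.inl rfl), ?_⟩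
      rw [show x * (x * h)⁻¹ = x * h⁻¹ * x⁻¹ by group]
      exact hmem _ (hconj _ (H.inv_mem hh)) (by simpa using hh1) (Ne.symm h₁_ne_conj_inv)
  · intro y hy hyH
    rcases hAH y hy hyH with rfl | rfl
    · exact ⟨y * h, Or.inr (Or.inr rfl), by
        rw [inv_mul_cancel_left]; exact hmem h hh hh1 (Ne.symm h₁_ne_h)⟩
    · refine ⟨x, Or.inr (Or.inl rfl), ?_⟩
      rw [show (x * h)⁻¹ * x = h⁻¹ by group]
      exact hmem _ (H.inv_mem hh) (by simpa using hh1) (Ne.symm h₁_ne_inv)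

theorem sq_mem_center_of_card_eq_eight (hG : Nat.card G = 8) (hnc : ¬IsMulCommutative G)
    (g : G) : g ^ 2 ∈ center G := by
  have : Fact (Nat.Prime 2) := ⟨Nat.prime_two⟩
  obtain ⟨k, hk, hZ⟩ := IsPGroup.card_center_eq_prime_pow (p := 2) (n := 3) hG (by norm_num)
  have hcyc : ¬IsCyclic (G ⧸ center G) := fun _ =>
    hnc (isMulCommutative_of_isCyclic_quotient_center_self G)
  have hQ : Nat.card (G ⧸ center G) ∣ 4 := by
    have hGQ := (center G).card_eq_card_quotient_mul_card_subgroup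
    rw [hG, hZ] at hGQ
    refine Nat.dvd_of_mul_dvd_mul_right two_pos ⟨2 ^ (k - 1), ?_⟩
    rw [show 4 * 2 = 8 by rfl, hGQ, mul_assoc, ← pow_succ', Nat.sub_add_cancel hk]
  have hord : orderOf (g : G ⧸ center G) ∣ 2 := by
    have hgQ := _root_.orderOf_dvd_natCard (g : G ⧸ center G)
    have hne : orderOf (g : G ⧸ center G) ≠ 4 := fun h4 =>
      hcyc (isCyclic_of_orderOf_eq_card _ (Nat.dvd_antisymm (h4 ▸ hgQ) hQ ▸ h4))
    have hg4 := hgQ.trans hQ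
    have hle := Nat.le_of_dvd four_pos hg4
    have hpos := Nat.pos_of_dvd_of_pos hg4 four_pos
    interval_cases h : orderOf (g : G ⧸ center G) <;> simp_all
  rw [← QuotientGroup.eq_one_iff, QuotientGroup.mk_pow]
  exact orderOf_dvd_iff_pow_eq_one.mp hord

theorem HasStrongCFS.isMulCommutative (hG : HasStrongCFS G) : IsMulCommutative G := by
  by_contra hnc
  have : Nontrivial G := not_subsingleton_iff_nontrivial.mp fun _ =>
    hnc ⟨⟨fun a b => Subsingleton.elim _ _⟩⟩
  set p := (Nat.card G).minFac
  have hp : p.Prime := Nat.minFac_prime Finite.one_lt_card.ne'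
  have : Fact p.Prime := ⟨hp⟩
  obtain ⟨n, hcard⟩ : ∃ n, Nat.card G = p ^ n :=
    ⟨_, Nat.eq_prime_pow_of_unique_prime_dvd Nat.card_pos.ne' hG.eq_minFac_of_prime_dvd⟩
  have hn : 3 ≤ n := by
    by_contra! hn
    exact hnc (isMulCommutative_of_card_eq_prime_pow hcard (by omega))
  by_cases h8 : Nat.card G = 8
  · obtain ⟨u, v, huv⟩ : ∃ u v : G, ¬Commute u v := by
      by_contra! h
      exact hnc ⟨⟨h⟩⟩
    obtain ⟨a, w, haw, ha⟩ := exists_not_commute_sq_ne_one huv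
    exact not_hasStrongCFS_of_not_commute haw ha
      (mem_center_iff.mp (sq_mem_center_of_card_eq_eight h8 hnc a) w).symm hG
  · obtain ⟨H, hH⟩ := Sylow.exists_subgroup_card_pow_prime p (n := n - 1)
      (hcard ▸ pow_dvd_pow p (Nat.sub_le n 1))
    have hHtop : H < ⊤ := by
      refine lt_top_iff_ne_top.mpr fun h => ?_
      rw [h, card_top, hcard] at hH
      exact absurd (Nat.pow_right_injective hp.two_le hH) (by omega)
    have := (IsPGroup.of_card hcard).isNilpotent
    obtain ⟨x, hxN, hxH⟩ :=
      SetLike.exists_of_lt (Group.normalizerCondition_of_isNilpotent H hHtop)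
    exact not_hasStrongCFS_of_mem_normalizer (hH ▸ Nat.six_le_pow_pred hp hn (hcard ▸ h8))
      hxN hxH hG

end

/-- For a finite group `G`, the following are equivalent:
(i) every Lagrange subset of `G` is a factor (the strong CFS property);
(ii) every Lagrange subset is a left factor;
(iii) every Lagrange subset is a right factor;
(iv) every Lagrange subset is both a left and a right factor;
(v) for every Lagrange subset `A` there is `B ⊆ G` with `G = A · B` and `G = B · A`. -/
theorem stmt_19 {G : Type*} [Group G] [Finite G] :
    [ (∀ A : Set G, Nat.card A ∣ Nat.card G → IsFactor A),
      (∀ A : Set G, Nat.card A ∣ Nat.card G → IsLeftFactor A),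
      (∀ A : Set G, Nat.card A ∣ Nat.card G → IsRightFactor A),
      (∀ A : Set G, Nat.card A ∣ Nat.card G → IsLeftFactor A ∧ IsRightFactor A),
      (∀ A : Set G, Nat.card A ∣ Nat.card G →
        ∃ B : Set G, IsDirectProd A B ∧ IsDirectProd B A) ].TFAE := by
  tfae_have 1 → 5 := fun h A hA => by
    have := HasStrongCFS.isMulCommutative h
    rcases h A hA with ⟨B, hB⟩ | ⟨B, hB⟩
    exacts [⟨B, hB, hB.symm⟩, ⟨B, hB.symm, hB⟩]
  tfae_have 5 → 4 := fun h A hA =>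
    let ⟨B, hAB, hBA⟩ := h A hA
    ⟨⟨B, hAB⟩, ⟨B, hBA⟩⟩
  tfae_have 4 → 2 := fun h A hA => (h A hA).1
  tfae_have 4 → 3 := fun h A hA => (h A hA).2
  tfae_have 2 → 1 := fun h A hA => Or.inl (h A hA)
  tfae_have 3 → 1 := fun h A hA => Or.inr (h A hA)
  tfae_finish
end
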